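/- Let n ∈ ℕ and let A, B, C : ℝ → Matrix ℝ n n, S : ℝ → Matrix ℝ n n, c : ℝ → ℝⁿ, ξ : ℝ → ℝⁿ, λ : ℝ → ℝⁿ all be continuously differentiable on an interval [0, T], with A, B, S continuous. Suppose that on [0, T]: (i) ξ'(τ) = A(τ)ξ(τ) − B(τ)λ(τ); (ii) λ'(τ) = −C(τ)ξ(τ) − A(τ)ᵀλ(τ); (iii) S satisfies the matrix Riccati differential equation S'(τ) = −A(τ)ᵀS(τ) − S(τ)A(τ) + S(τ)B(τ)S(τ) − C(τ); (iv) c'(τ) = −(A(τ)ᵀ − S(τ)B(τ))c(τ); and (v) the terminal condition λ(T) = S(T)ξ(T) + c(T) holds. Then λ(τ) = S(τ)ξ(τ) + c(τ) for all τ ∈ [0, T]. -/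

import Mathlib

/-!
The residual `e = λ - S ξ - c` solves the homogeneous linear equation `e' = -(Aᵀ - S B) e`:
differentiating, the Riccati equation for `S` and the equation for `c` cancel every term that
is not a multiple of `e`. Since `e(T) = 0` and the coefficient is continuous, hence bounded, on
`[0, T]`, uniqueness of solutions of linear ODEs (Grönwall) gives `e ≡ 0`.
-/

open Matrix Set

attribute [local instance] Matrix.normedAddCommGroup Matrix.normedSpace

noncomputable def Matrix.mulVecCLM {m n : Type*} [Fintype m] [Fintype n] :
    Matrix m n ℝ →L[ℝ] (n → ℝ) →L[ℝ] m → ℝ :=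
  LinearMap.toContinuousLinearMap
    ((LinearMap.toContinuousLinearMap : ((n → ℝ) →ₗ[ℝ] m → ℝ) ≃ₗ[ℝ] _).toLinearMap ∘ₗ
      mulVecBilin ℝ ℝ)

theorem HasDerivWithinAt.matrix_mulVec {m n : Type*} [Fintype m] [Fintype n]
    {M : ℝ → Matrix m n ℝ} {v : ℝ → n → ℝ} {M' : Matrix m n ℝ} {v' : n → ℝ} {s : Set ℝ} {t : ℝ}
    (hM : HasDerivWithinAt M M' s t) (hv : HasDerivWithinAt v v' s t) :
    HasDerivWithinAt (fun t => M t *ᵥ v t) (M' *ᵥ v t + M t *ᵥ v') s t :=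
  (mulVecCLM.hasDerivWithinAt_of_bilinear hM hv).congr_deriv (add_comm _ _)

theorem linear_ODE_eqOn_zero_of_terminal_eq_zero {E : Type*} [NormedAddCommGroup E]
    [NormedSpace ℝ E] {L : ℝ → E →L[ℝ] E} {f : ℝ → E} {a b : ℝ}
    (hL : ContinuousOn L (Icc a b))
    (hf : ∀ t ∈ Icc a b, HasDerivWithinAt f (L t (f t)) (Icc a b) t) (hb : f b = 0) :
    EqOn f 0 (Icc a b) := by
  obtain ⟨K, hK⟩ := isCompact_Icc.exists_bound_of_continuousOn hL
  have hLip : ∀ t ∈ Ioc a b, LipschitzOnWith K.toNNReal (L t) univ := by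
    intro t ht
    have hnorm : ‖L t‖₊ ≤ K.toNNReal := by
      simpa using Real.toNNReal_le_toNNReal (hK t (Ioc_subset_Icc_self ht))
    exact ((L t).lipschitz.weaken hnorm).lipschitzOnWith
  refine ODE_solution_unique_of_mem_Icc_left (v := fun t => L t) (s := fun _ => univ) hLip
    (fun t ht => (hf t ht).continuousWithinAt)
    (fun t ht => (hf t (Ioc_subset_Icc_self ht)).mono_of_mem_nhdsWithin
      (Icc_mem_nhdsLE_of_mem ht))
    (fun _ _ => mem_univ _) continuousOn_const
    (fun t _ => by rw [Pi.zero_apply, map_zero]; exact hasDerivWithinAt_const t (Iic t) 0)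
    (fun _ _ => mem_univ _) hb

lemma Matrix.sweep_residual_identity {R m : Type*} [Ring R] [Fintype m]
    (A B C S : Matrix m m R) (ξ lam c : m → R) :
    (-(C *ᵥ ξ) - Aᵀ *ᵥ lam) - ((-Aᵀ * S - S * A + S * B * S - C) *ᵥ ξ + S *ᵥ (A *ᵥ ξ - B *ᵥ lam))
      - -((Aᵀ - S * B) *ᵥ c) = -((Aᵀ - S * B) *ᵥ (lam - S *ᵥ ξ - c)) := by
  simp only [sub_mulVec, add_mulVec, neg_mulVec, mulVec_sub, ← mulVec_mulVec]
  abel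

theorem backward_sweep_relation_general {n : ℕ} (T : ℝ)
    (A B C : ℝ → Matrix (Fin n) (Fin n) ℝ)
    (S : ℝ → Matrix (Fin n) (Fin n) ℝ)
    (c ξ lam : ℝ → (Fin n → ℝ))
    (hAcont : ContinuousOn A (Icc 0 T))
    (hBcont : ContinuousOn B (Icc 0 T))
    (hξ : ∀ τ ∈ Icc 0 T,
      HasDerivWithinAt ξ (A τ *ᵥ ξ τ - B τ *ᵥ lam τ) (Icc 0 T) τ)
    (hlam : ∀ τ ∈ Icc 0 T,
      HasDerivWithinAt lam (-(C τ *ᵥ ξ τ) - (A τ)ᵀ *ᵥ lam τ) (Icc 0 T) τ)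
    (hS : ∀ τ ∈ Icc 0 T,
      HasDerivWithinAt S (-(A τ)ᵀ * S τ - S τ * A τ + S τ * B τ * S τ - C τ) (Icc 0 T) τ)
    (hc : ∀ τ ∈ Icc 0 T,
      HasDerivWithinAt c (-(((A τ)ᵀ - S τ * B τ) *ᵥ c τ)) (Icc 0 T) τ)
    (hterm : lam T = S T *ᵥ ξ T + c T) :
    ∀ τ ∈ Icc 0 T, lam τ = S τ *ᵥ ξ τ + c τ := by
  set M : ℝ → Matrix (Fin n) (Fin n) ℝ := fun t => (A t)ᵀ - S t * B t
  have hMcont : ContinuousOn M (Icc 0 T) := by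
    have hScont : ContinuousOn S (Icc 0 T) := fun τ hτ => (hS τ hτ).continuousWithinAt
    exact ((continuous_id.matrix_transpose).comp_continuousOn hAcont).sub
      ((continuous_fst.matrix_mul continuous_snd).comp_continuousOn (hScont.prodMk hBcont))
  have hres : ∀ τ ∈ Icc 0 T, HasDerivWithinAt (fun t => lam t - S t *ᵥ ξ t - c t)
      ((-mulVecCLM (M τ)) (lam τ - S τ *ᵥ ξ τ - c τ)) (Icc 0 T) τ := fun τ hτ =>
    (((hlam τ hτ).sub ((hS τ hτ).matrix_mulVec (hξ τ hτ))).sub (hc τ hτ)).congr_deriv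
      (sweep_residual_identity ..)
  intro τ hτ
  have := linear_ODE_eqOn_zero_of_terminal_eq_zero
    (mulVecCLM.continuous.comp_continuousOn hMcont).neg hres (by simp [hterm]) hτ
  simpa [sub_sub, sub_eq_zero] using this

/-- Backward-sweep relation: if `ξ, λ` solve the linear Hamiltonian system
`ξ' = Aξ − Bλ`, `λ' = −Cξ − Aᵀλ` on `[0, T]`, `S` solves the matrix Riccati
equation `S' = −AᵀS − SA + SBS − C`, `c` solves `c' = −(Aᵀ − SB)c`, and the
terminal condition `λ(T) = S(T)ξ(T) + c(T)` holds, then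
`λ(τ) = S(τ)ξ(τ) + c(τ)` on all of `[0, T]`. -/
theorem backward_sweep_relation {n : ℕ} (T : ℝ) (hT : 0 ≤ T)
    (A B C : ℝ → Matrix (Fin n) (Fin n) ℝ)
    (S : ℝ → Matrix (Fin n) (Fin n) ℝ)
    (c ξ lam : ℝ → (Fin n → ℝ))
    (hAcont : ContinuousOn A (Icc 0 T))
    (hBcont : ContinuousOn B (Icc 0 T))
    (hCcont : ContinuousOn C (Icc 0 T))
    (hScont : ContinuousOn S (Icc 0 T))
    (hξ : ∀ τ ∈ Icc 0 T,
      HasDerivWithinAt ξ (A τ *ᵥ ξ τ - B τ *ᵥ lam τ) (Icc 0 T) τ)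
    (hlam : ∀ τ ∈ Icc 0 T,
      HasDerivWithinAt lam (-(C τ *ᵥ ξ τ) - (A τ)ᵀ *ᵥ lam τ) (Icc 0 T) τ)
    (hS : ∀ τ ∈ Icc 0 T,
      HasDerivWithinAt S (-(A τ)ᵀ * S τ - S τ * A τ + S τ * B τ * S τ - C τ) (Icc 0 T) τ)
    (hc : ∀ τ ∈ Icc 0 T,
      HasDerivWithinAt c (-(((A τ)ᵀ - S τ * B τ) *ᵥ c τ)) (Icc 0 T) τ)
    (hterm : lam T = S T *ᵥ ξ T + c T) :
    ∀ τ ∈ Icc 0 T, lam τ = S τ *ᵥ ξ τ + c τ :=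
  backward_sweep_relation_general T A B C S c ξ lam hAcont hBcont hξ hlam hS hc hterm
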